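/- arXiv:2001.09361 — 6 statements merged into one kernel-verified Lean document; each statement's English description precedes it below -/
import Mathlib

section
/- Let F : A × A → M be an f-biderivation. If α ≠ 0, M is (n-1)-torsion free, and α is M-regular, then F is a Jordan biderivation, i.e., for all x, y, z ∈ A: F(xy + yx, z) = F(x,z)y + xF(y,z) + F(y,z)x + yF(x,z) and F(z, xy + yx) = F(z,x)y + xF(z,y) + F(z,y)x + yF(z,x). -/
/-!
Fixing one argument of `F` leaves a linear map `G : A → M` obeying the `f`-derivation rule.
Putting `xₖ = 1` for all `k` gives `α • G 1 = n • α • G 1`, so `G 1 = 0` by `(n-1)`-torsion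
freeness and regularity of `α`. Putting `a` and `b` in two distinct slots `i`, `j` and `1`
elsewhere, every monomial collapses to `a * b` or `b * a` according to whether `π` places slot `i`
before slot `j`; splitting `α = α' + α''` along this dichotomy gives
`α' G(ab) + α'' G(ba) = α' (G(a) b + a G(b)) + α'' (b G(a) + G(b) a)`.
Adding the same identity with `a` and `b` exchanged leaves `α` times the Jordan defect, which
vanishes since `α` is `M`-regular.
-/

open MulOpposite Equiv

namespace List

variable {A : Type*} [Monoid A]

theorem prod_eq_getD_of_forall_ne_eq_one :
    ∀ (l : List A) (j : ℕ), (∀ k (hk : k < l.length), k ≠ j → l[k] = 1) → l.prod = l.getD j 1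
  | [], _, _ => rfl
  | a :: l, 0, h => by
    have hl : l.prod = 1 := prod_eq_one fun x hx => by
      obtain ⟨k, hk, rfl⟩ := getElem_of_mem hx
      exact h (k + 1) (by simpa using hk) (by omega)
    simp [hl]
  | a :: l, j + 1, h => by
    have ha : a = 1 := h 0 (by simp) (by omega)
    rw [prod_cons, ha, one_mul, getD_cons_succ]
    exact prod_eq_getD_of_forall_ne_eq_one l j fun k hk hkj =>
      h (k + 1) (by simpa using hk) (by omega)

variable {n : ℕ}

theorem prod_ofFn_eq_prod_take_mul_mul_prod_drop (g : Fin n → A) (p : Fin n) :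
    (ofFn g).prod = ((ofFn g).take p).prod * g p * ((ofFn g).drop (p + 1)).prod := by
  rw [← prod_take_mul_prod_drop (ofFn g) (p + 1), prod_take_succ _ _ (by simp)]
  simp

variable {g : Fin n → A} {p q : Fin n}

theorem prod_take_ofFn_of_eq_one (h : ∀ k, k ≠ p → k ≠ q → g k = 1) :
    ((ofFn g).take p).prod = if q < p then g q else 1 := by
  rw [prod_eq_getD_of_forall_ne_eq_one _ q fun k hk hkq => ?_]
  · split_ifs with hqp <;> simp [getD_eq_getElem?_getD, hqp]
  · simp only [length_take, length_ofFn, lt_min_iff] at hk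
    simpa using h ⟨k, hk.2⟩ (by simp [Fin.ext_iff]; omega) (by simpa [Fin.ext_iff] using hkq)

theorem prod_drop_ofFn_of_eq_one (h : ∀ k, k ≠ p → k ≠ q → g k = 1) :
    ((ofFn g).drop (p + 1)).prod = if p < q then g q else 1 := by
  have hg : ∀ k (hk : k < ((ofFn g).drop (p + 1)).length), k ≠ q - (p + 1) ∨ q ≤ p →
      ((ofFn g).drop (p + 1))[k] = 1 := fun k hk hkq => by
    simp only [length_drop, length_ofFn] at hk
    simpa using h ⟨p + 1 + k, by omega⟩ (by simp [Fin.ext_iff]; omega)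
      (by simp [Fin.ext_iff]; omega)
  split_ifs with hpq
  · rw [prod_eq_getD_of_forall_ne_eq_one _ (q - (p + 1)) fun k hk hkq => hg k hk (.inl hkq)]
    have hq : (p : ℕ) + 1 + (q - (p + 1)) = q := by omega
    simp [getD_eq_getElem?_getD, hq]
  · exact prod_eq_one fun x hx => by
      obtain ⟨k, hk, rfl⟩ := getElem_of_mem hx
      exact hg k hk (.inr (not_lt.1 hpq))

theorem prod_ofFn_of_eq_one (hpq : p ≠ q) (h : ∀ k, k ≠ p → k ≠ q → g k = 1) :
    (ofFn g).prod = if p < q then g p * g q else g q * g p := by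
  rw [prod_ofFn_eq_prod_take_mul_mul_prod_drop g p, prod_take_ofFn_of_eq_one h,
    prod_drop_ofFn_of_eq_one h]
  rcases hpq.lt_or_gt with hlt | hgt
  · simp [hlt, hlt.not_gt]
  · simp [hgt, hgt.not_gt]

theorem prod_take_ofFn_smul_op_prod_drop_smul_of_eq_one {M : Type*} [MulAction A M]
    [MulAction Aᵐᵒᵖ M] (hpq : p ≠ q) (h : ∀ k, k ≠ p → k ≠ q → g k = 1) (m : M) :
    ((ofFn g).take p).prod • op ((ofFn g).drop (p + 1)).prod • m
      = if p < q then op (g q) • m else g q • m := by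
  rw [prod_take_ofFn_of_eq_one h, prod_drop_ofFn_of_eq_one h]
  rcases hpq.lt_or_gt with hlt | hgt
  · simp [hlt, hlt.not_gt]
  · simp [hgt, hgt.not_gt]

end List

section OrderedWeight

variable {R : Type*} [Semiring R] {n : ℕ} (α : Perm (Fin n) → R)

def orderedWeight (i j : Fin n) : R :=
  ∑ π ∈ Finset.univ.filter (fun π : Perm (Fin n) => π.symm i < π.symm j), α π

variable {α}

theorem sum_smul_ite_symm_lt {N : Type*} [AddCommMonoid N] [Module R N] {i j : Fin n}
    (hij : i ≠ j) (u v : N) :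
    ∑ π : Perm (Fin n), α π • (if π.symm i < π.symm j then u else v)
      = orderedWeight α i j • u + orderedWeight α j i • v := by
  simp only [smul_ite]
  rw [Finset.sum_ite, orderedWeight, orderedWeight, Finset.sum_smul, Finset.sum_smul]
  refine congrArg _ (Finset.sum_congr (Finset.filter_congr fun π _ => ?_) fun _ _ => rfl)
  exact not_lt.trans (π.symm.injective.ne hij.symm).le_iff_lt

theorem orderedWeight_add_orderedWeight {i j : Fin n} (hij : i ≠ j) :
    orderedWeight α i j + orderedWeight α j i = ∑ π, α π := by
  simpa using (sum_smul_ite_symm_lt (α := α) hij (1 : R) 1).symm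

end OrderedWeight

section PermPoly

variable {R A M : Type*} [CommRing R] [Ring A] [Algebra R A] [AddCommGroup M] [Module R M]
  [Module A M] [Module Aᵐᵒᵖ M] {n : ℕ} (α : Perm (Fin n) → R)

/-- `f(x₁, …, xₙ) = ∑_π α_π x_{π 1} ⋯ x_{π n}`. -/
def permPoly (x : Fin n → A) : A :=
  ∑ π : Perm (Fin n), α π • (List.ofFn fun j => x (π j)).prod

/-- `f(x₁, …, x_{i-1}, m, x_{i+1}, …, xₙ)` for `m` in the bimodule `M`. -/
def permPolyInsert (x : Fin n → A) (i : Fin n) (m : M) : M :=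
  ∑ π : Perm (Fin n), α π • (((List.ofFn fun j => x (π j)).take (π.symm i)).prod •
    (op ((List.ofFn fun j => x (π j)).drop (π.symm i + 1)).prod • m))

def IsPermPolyDerivation (G : A →ₗ[R] M) : Prop :=
  ∀ x : Fin n → A, G (permPoly α x) = ∑ i, permPolyInsert α x i (G (x i))

variable {α}

theorem IsPermPolyDerivation.map_one {G : A →ₗ[R] M} (hG : IsPermPolyDerivation α G)
    (htf : ∀ v : M, (n - 1) • v = 0 → v = 0) (hreg : ∀ v : M, (∑ π, α π) • v = 0 → v = 0) :
    G 1 = 0 := by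
  have h := hG fun _ => 1
  simp only [permPoly, permPolyInsert, List.ofFn_const, List.prod_replicate, one_pow,
    List.take_replicate, List.drop_replicate, op_one, one_smul, ← Finset.sum_smul, map_smul,
    Finset.sum_const, Finset.card_univ, Fintype.card_fin] at h
  rw [smul_assoc] at h
  refine hreg _ (htf _ ?_)
  obtain _ | n := n
  · simp
  · rw [succ_nsmul] at h
    simpa using h

theorem IsPermPolyDerivation.orderedWeight_smul_map_mul {G : A →ₗ[R] M}
    (hG : IsPermPolyDerivation α G) (hone : G 1 = 0) {i j : Fin n} (hij : i ≠ j) (a b : A) :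
    orderedWeight α i j • G (a * b) + orderedWeight α j i • G (b * a)
      = orderedWeight α i j • (op b • G a + a • G b)
        + orderedWeight α j i • (b • G a + op a • G b) := by
  set x : Fin n → A := Pi.mulSingle i a * Pi.mulSingle j b
  have hxi : x i = a := by simp [x, hij]
  have hxj : x j = b := by simp [x, hij.symm]
  have hx : ∀ k, k ≠ i → k ≠ j → x k = 1 := fun k hki hkj => by simp [x, hki, hkj]
  have hxπ (π : Perm (Fin n)) k (hki : k ≠ π.symm i) (hkj : k ≠ π.symm j) : x (π k) = 1 :=
    hx _ (fun h => hki (π.eq_symm_apply.2 h)) (fun h => hkj (π.eq_symm_apply.2 h))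
  have hne (π : Perm (Fin n)) : π.symm i ≠ π.symm j := π.symm.injective.ne hij
  have hpoly : permPoly α x = orderedWeight α i j • (a * b) + orderedWeight α j i • (b * a) := by
    rw [permPoly, ← sum_smul_ite_symm_lt hij]
    refine Finset.sum_congr rfl fun π _ => ?_
    rw [List.prod_ofFn_of_eq_one (hne π) (hxπ π)]
    simp [hxi, hxj]
  have hinsert_i (m : M) :
      permPolyInsert α x i m = orderedWeight α i j • op b • m + orderedWeight α j i • b • m := by
    rw [permPolyInsert, ← sum_smul_ite_symm_lt hij]
    refine Finset.sum_congr rfl fun π _ => ?_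
    rw [List.prod_take_ofFn_smul_op_prod_drop_smul_of_eq_one (hne π) (hxπ π)]
    simp [hxj]
  have hinsert_j (m : M) :
      permPolyInsert α x j m = orderedWeight α j i • op a • m + orderedWeight α i j • a • m := by
    rw [permPolyInsert, ← sum_smul_ite_symm_lt hij.symm]
    refine Finset.sum_congr rfl fun π _ => ?_
    rw [List.prod_take_ofFn_smul_op_prod_drop_smul_of_eq_one (hne π).symm
      (fun k hkj hki => hxπ π k hki hkj)]
    simp [hxi]
  have hinsert_other (k : Fin n) (hk : k ≠ i ∧ k ≠ j) : permPolyInsert α x k (G (x k)) = 0 := by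
    simp [permPolyInsert, hx k hk.1 hk.2, hone]
  have h := hG x
  rw [hpoly, Fintype.sum_eq_add i j hij hinsert_other, hinsert_i, hinsert_j, hxi, hxj, map_add,
    map_smul, map_smul] at h
  rw [h, smul_add, smul_add]
  abel

theorem IsPermPolyDerivation.map_mul_add_mul_swap {G : A →ₗ[R] M}
    (hG : IsPermPolyDerivation α G) (hn : 2 ≤ n)
    (htf : ∀ v : M, (n - 1) • v = 0 → v = 0) (hreg : ∀ v : M, (∑ π, α π) • v = 0 → v = 0)
    (a b : A) : G (a * b + b * a) = op b • G a + a • G b + op a • G b + b • G a := by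
  have hone := hG.map_one htf hreg
  obtain ⟨i, j, hij⟩ : ∃ i j : Fin n, i ≠ j :=
    ⟨⟨0, by omega⟩, ⟨1, by omega⟩, by simp [Fin.ext_iff]⟩
  have hab := hG.orderedWeight_smul_map_mul hone hij a b
  have hba := hG.orderedWeight_smul_map_mul hone hij b a
  refine sub_eq_zero.1 (hreg _ ?_)
  rw [← orderedWeight_add_orderedWeight hij, map_add]
  generalize op b • G a = u₁, b • G a = u₂, a • G b = u₃, op a • G b = u₄ at hab hba ⊢
  linear_combination (norm := module) hab + hba

end PermPoly

theorem f_biderivation_is_jordan_biderivation_general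
    (R A M : Type*) [CommRing R] [Ring A] [Algebra R A]
    [AddCommGroup M] [Module R M]
    [Module A M] [Module Aᵐᵒᵖ M]
    (n : ℕ) (hn : 2 ≤ n)
    (α : Equiv.Perm (Fin n) → R)
    (F : A →ₗ[R] A →ₗ[R] M)
    -- `F` is an `f`-biderivation:
    (hF1 : ∀ (x : Fin n → A) (z : A),
      F (∑ π : Equiv.Perm (Fin n), α π • (List.ofFn fun j => x (π j)).prod) z
        = ∑ i : Fin n, ∑ π : Equiv.Perm (Fin n),
            α π • (((List.ofFn fun j => x (π j)).take (π.symm i).val).prod •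
              (MulOpposite.op ((List.ofFn fun j => x (π j)).drop ((π.symm i).val + 1)).prod •
                F (x i) z)))
    (hF2 : ∀ (x : Fin n → A) (z : A),
      F z (∑ π : Equiv.Perm (Fin n), α π • (List.ofFn fun j => x (π j)).prod)
        = ∑ i : Fin n, ∑ π : Equiv.Perm (Fin n),
            α π • (((List.ofFn fun j => x (π j)).take (π.symm i).val).prod •
              (MulOpposite.op ((List.ofFn fun j => x (π j)).drop ((π.symm i).val + 1)).prod •
                F z (x i))))
    -- `M` is `(n-1)`-torsion free:
    (htf : ∀ m : M, (n - 1) • m = 0 → m = 0)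
    -- `α` is `M`-regular:
    (hreg : ∀ m : M, (∑ π : Equiv.Perm (Fin n), α π) • m = 0 → m = 0) :
    (∀ x y z : A, F (x * y + y * x) z
        = MulOpposite.op y • F x z + x • F y z + MulOpposite.op x • F y z + y • F x z) ∧
    (∀ x y z : A, F z (x * y + y * x)
        = MulOpposite.op y • F z x + x • F z y + MulOpposite.op x • F z y + y • F z x) := by
  refine ⟨fun x y z => ?_, fun x y z => ?_⟩
  · have hG : IsPermPolyDerivation α (F.flip z) := fun x => hF1 x z
    simpa using hG.map_mul_add_mul_swap hn htf hreg x y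
  · have hG : IsPermPolyDerivation α (F z) := fun x => hF2 x z
    exact hG.map_mul_add_mul_swap hn htf hreg x y

/-- Let `F : A × A → M` be an `f`-biderivation, where
`f(x₁,...,xₙ) = ∑_{π ∈ Sₙ} α_π x_{π(1)} ⋯ x_{π(n)}` is a fixed multilinear polynomial
and `α = ∑_π α_π`.  If `α ≠ 0`, `M` is `(n-1)`-torsion free and `α` is `M`-regular,
then `F` is a Jordan biderivation. -/
theorem f_biderivation_is_jordan_biderivation
    (R A M : Type*) [CommRing R] [Ring A] [Algebra R A]
    [AddCommGroup M] [Module R M]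
    [Module A M] [Module Aᵐᵒᵖ M] [SMulCommClass A Aᵐᵒᵖ M]
    [IsScalarTower R A M] [IsScalarTower R Aᵐᵒᵖ M]
    (n : ℕ) (hn : 2 ≤ n)
    (α : Equiv.Perm (Fin n) → R)
    (hα₀ : ∃ π : Equiv.Perm (Fin n), α π ≠ 0)
    (F : A →ₗ[R] A →ₗ[R] M)
    -- `F` is an `f`-biderivation:
    (hF1 : ∀ (x : Fin n → A) (z : A),
      F (∑ π : Equiv.Perm (Fin n), α π • (List.ofFn fun j => x (π j)).prod) z
        = ∑ i : Fin n, ∑ π : Equiv.Perm (Fin n),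
            α π • (((List.ofFn fun j => x (π j)).take (π.symm i).val).prod •
              (MulOpposite.op ((List.ofFn fun j => x (π j)).drop ((π.symm i).val + 1)).prod •
                F (x i) z)))
    (hF2 : ∀ (x : Fin n → A) (z : A),
      F z (∑ π : Equiv.Perm (Fin n), α π • (List.ofFn fun j => x (π j)).prod)
        = ∑ i : Fin n, ∑ π : Equiv.Perm (Fin n),
            α π • (((List.ofFn fun j => x (π j)).take (π.symm i).val).prod •
              (MulOpposite.op ((List.ofFn fun j => x (π j)).drop ((π.symm i).val + 1)).prod •
                F z (x i))))
    -- `α ≠ 0`: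
    (hα : (∑ π : Equiv.Perm (Fin n), α π) ≠ 0)
    -- `M` is `(n-1)`-torsion free:
    (htf : ∀ m : M, (n - 1) • m = 0 → m = 0)
    -- `α` is `M`-regular:
    (hreg : ∀ m : M, (∑ π : Equiv.Perm (Fin n), α π) • m = 0 → m = 0) :
    (∀ x y z : A, F (x * y + y * x) z
        = MulOpposite.op y • F x z + x • F y z + MulOpposite.op x • F y z + y • F x z) ∧
    (∀ x y z : A, F z (x * y + y * x)
        = MulOpposite.op y • F z x + x • F z y + MulOpposite.op x • F z y + y • F z x) :=
  f_biderivation_is_jordan_biderivation_general R A M n hn α F hF1 hF2 htf hreg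
end

section
/- Let J : A × A → A be a Jordan biderivation. Then [[x, y], J(x, y)] = 0 for all x, y ∈ A. -/
theorem commute_commutator_of_jordan_biderivation {A : Type*} [NonUnitalRing A]
    (J : A → A → A)
    (hJ1 : ∀ x y : A, J (x * x) y = x * J x y + J x y * x)
    (hJ2 : ∀ x y : A, J x (y * y) = y * J x y + J x y * y) (x y : A) :
    Commute (x * y - y * x) (J x y) := by
  have expand_left_first :
      J (x * x) (y * y) = x * (y * J x y + J x y * y) + (y * J x y + J x y * y) * x := by
    rw [hJ1, hJ2]
  have expand_right_first :
      J (x * x) (y * y) = y * (x * J x y + J x y * x) + (x * J x y + J x y * x) * y := by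
    rw [hJ2, hJ1]
  -- the two expansions differ by exactly `[[x, y], J x y]`
  rw [Commute, SemiconjBy, ← sub_eq_zero]
  linear_combination (norm := noncomm_ring) expand_left_first.symm.trans expand_right_first

theorem jordan_biderivation_commutator_general
    (R A : Type*) [CommRing R] [Ring A] [Algebra R A]
    (J : A →ₗ[R] A →ₗ[R] A)
    -- `J` is a Jordan biderivation:
    (hJ1 : ∀ x y : A, J (x * x) y = x * J x y + J x y * x)
    (hJ2 : ∀ x y : A, J x (y * y) = y * J x y + J x y * y) :
    ∀ x y : A, (x * y - y * x) * J x y - J x y * (x * y - y * x) = 0 := fun x y =>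
  sub_eq_zero.mpr (commute_commutator_of_jordan_biderivation (J · ·) hJ1 hJ2 x y).eq

/-- Let `J : A × A → A` be a Jordan biderivation.
Then `[[x, y], J(x, y)] = 0` for all `x, y ∈ A`. -/
theorem jordan_biderivation_commutator
    (R A : Type*) [CommRing R] [Ring A] [Algebra R A]
    -- `A` is 2-torsion free:
    (htf : ∀ x : A, x + x = 0 → x = 0)
    (J : A →ₗ[R] A →ₗ[R] A)
    -- `J` is a Jordan biderivation:
    (hJ1 : ∀ x y : A, J (x * x) y = x * J x y + J x y * x)
    (hJ2 : ∀ x y : A, J x (y * y) = y * J x y + J x y * y) :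
    ∀ x y : A, (x * y - y * x) * J x y - J x y * (x * y - y * x) = 0 :=
  jordan_biderivation_commutator_general R A J hJ1 hJ2
end

section
/- Let J : A × A → A be a Jordan biderivation. Then [[x, y], J(e, e)] = 0 for all x, y ∈ A. -/
/-!
Polarizing both Jordan identities and expanding `J (x z + z x) (y w + w y)` in the two possible
orders gives `⁅⁅x, y⁆, J z w⁆ + ⁅⁅x, w⁆, J z y⁆ + ⁅⁅z, y⁆, J x w⁆ + ⁅⁅z, w⁆, J x y⁆ = 0`.
With `f = J e e`, specializing to `(v, e, e, e)` gives `2 ⁅⁅v, e⁆, f⁆ = 0`, and to `(a, e, b, e)`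
with `a, b` commuting with `e` gives `⁅⁅a, b⁆, f⁆ = 0`. Since `e` is idempotent, every `x` splits
as a part commuting with `e` plus `⁅⁅x, e⁆, e⁆`; the Jacobi identity then reduces
`⁅⁅x, y⁆, f⁆ = 0` to these two cases.
-/

structure IsJordanBiderivation {R A : Type*} [CommRing R] [Ring A] [Algebra R A]
    (J : A →ₗ[R] A →ₗ[R] A) : Prop where
  map_mul_self_left : ∀ x y : A, J (x * x) y = x * J x y + J x y * x
  map_mul_self_right : ∀ x y : A, J x (y * y) = y * J x y + J x y * y

theorem Commute.lie_left {A : Type*} [NonUnitalRing A] {a b f : A} (ha : Commute a f)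
    (hb : Commute b f) : Commute ⁅a, b⁆ f := by
  rw [Ring.lie_def]
  exact (ha.mul_left hb).sub_left (hb.mul_left ha)

section

-- Kept local to this section: with it in scope, `x * y - y * x` in the final theorem would
-- elaborate through a different `Sub` instance.
attribute [local instance] LieRing.ofAssociativeRing

namespace IsJordanBiderivation

variable {R A : Type*} [CommRing R] [Ring A] [Algebra R A] {J : A →ₗ[R] A →ₗ[R] A}

theorem map_jordan_left (hJ : IsJordanBiderivation J) (x z y : A) :
    J (x * z + z * x) y = x * J z y + J z y * x + z * J x y + J x y * z := by
  have h := hJ.map_mul_self_left (x + z) y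
  simp only [add_mul, mul_add, map_add, LinearMap.add_apply, hJ.map_mul_self_left] at h ⊢
  linear_combination (norm := noncomm_ring) h

theorem map_jordan_right (hJ : IsJordanBiderivation J) (x y w : A) :
    J x (y * w + w * y) = y * J x w + J x w * y + w * J x y + J x y * w := by
  have h := hJ.map_mul_self_right x (y + w)
  simp only [add_mul, mul_add, map_add, hJ.map_mul_self_right] at h ⊢
  linear_combination (norm := noncomm_ring) h

theorem lie_lie_polarized_eq_zero (hJ : IsJordanBiderivation J) (x z y w : A) :
    ⁅⁅x, y⁆, J z w⁆ + ⁅⁅x, w⁆, J z y⁆ + ⁅⁅z, y⁆, J x w⁆ + ⁅⁅z, w⁆, J x y⁆ = 0 := by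
  have h := (hJ.map_jordan_left x z (y * w + w * y)).symm.trans
    (hJ.map_jordan_right (x * z + z * x) y w)
  simp only [hJ.map_jordan_left, hJ.map_jordan_right] at h
  simp only [Ring.lie_def]
  linear_combination (norm := noncomm_ring) h

theorem commute_lie_map_self (hJ : IsJordanBiderivation J)
    (htf : ∀ x : A, x + x = 0 → x = 0) (v e : A) : Commute ⁅v, e⁆ (J e e) := by
  have h := hJ.lie_lie_polarized_eq_zero v e e e
  simp only [lie_self, zero_lie, add_zero] at h
  exact commute_iff_lie_eq.mpr (htf _ h)

theorem commute_lie_map_self_of_commute (hJ : IsJordanBiderivation J) {a b e : A}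
    (ha : Commute a e) (hb : Commute b e) : Commute ⁅a, b⁆ (J e e) := by
  have h := hJ.lie_lie_polarized_eq_zero a e b e
  rw [ha.lie_eq, ← lie_skew e b, hb.lie_eq] at h
  simp only [lie_self, neg_zero, zero_lie, add_zero] at h
  exact commute_iff_lie_eq.mpr h

end IsJordanBiderivation

variable {A : Type*} [Ring A] {e : A}

theorem IsIdempotentElem.lie_lie_lie (he : IsIdempotentElem e) (x : A) :
    ⁅⁅⁅x, e⁆, e⁆, e⁆ = ⁅x, e⁆ := by
  simp only [Ring.lie_def, sub_mul, mul_sub, mul_assoc, he.eq, he.mul_self_mul]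
  noncomm_ring

theorem IsIdempotentElem.commute_sub_lie_lie (he : IsIdempotentElem e) (x : A) :
    Commute (x - ⁅⁅x, e⁆, e⁆) e := by
  rw [commute_iff_lie_eq, sub_lie, he.lie_lie_lie, sub_self]

theorem IsIdempotentElem.commute_lie_of_forall (he : IsIdempotentElem e) {f : A}
    (hoff : ∀ v : A, Commute ⁅v, e⁆ f)
    (hdiag : ∀ a b : A, Commute a e → Commute b e → Commute ⁅a, b⁆ f) (x y : A) :
    Commute ⁅x, y⁆ f := by
  have hmixed : ∀ a v : A, Commute a e → Commute ⁅a, ⁅v, e⁆⁆ f := fun a v ha => by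
    rw [leibniz_lie, ha.lie_eq, lie_zero, add_zero]
    exact hoff _
  have hx := he.commute_sub_lie_lie x
  have hy := he.commute_sub_lie_lie y
  rw [← sub_add_cancel x ⁅⁅x, e⁆, e⁆, ← sub_add_cancel y ⁅⁅y, e⁆, e⁆]
  simp only [add_lie, lie_add]
  refine ((hdiag _ _ hx hy).add_left ?_).add_left
    ((hmixed _ _ hx).add_left ((hoff _).lie_left (hoff _)))
  rw [← lie_skew]
  exact (hmixed _ _ hy).neg_left

end

theorem jordan_biderivation_commutator_at_idempotent_general
    (R A : Type*) [CommRing R] [Ring A] [Algebra R A]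
    -- `A` is 2-torsion free:
    (htf : ∀ x : A, x + x = 0 → x = 0)
    -- `e` is a nontrivial idempotent:
    (e : A) (he : e * e = e)
    (J : A →ₗ[R] A →ₗ[R] A)
    -- `J` is a Jordan biderivation:
    (hJ1 : ∀ x y : A, J (x * x) y = x * J x y + J x y * x)
    (hJ2 : ∀ x y : A, J x (y * y) = y * J x y + J x y * y) :
    ∀ x y : A, (x * y - y * x) * J e e - J e e * (x * y - y * x) = 0 := by
  intro x y
  have hJ : IsJordanBiderivation J := ⟨hJ1, hJ2⟩
  have h := IsIdempotentElem.commute_lie_of_forall (f := J e e) he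
    (hJ.commute_lie_map_self htf · e) (fun _ _ => hJ.commute_lie_map_self_of_commute) x y
  rwa [commute_iff_lie_eq, Ring.lie_def, Ring.lie_def] at h

/-- Let `J : A × A → A` be a Jordan biderivation and `e` a nontrivial
idempotent of `A`.  Then `[[x, y], J(e, e)] = 0` for all `x, y ∈ A`. -/
theorem jordan_biderivation_commutator_at_idempotent
    (R A : Type*) [CommRing R] [Ring A] [Algebra R A]
    -- `A` is 2-torsion free:
    (htf : ∀ x : A, x + x = 0 → x = 0)
    -- `e` is a nontrivial idempotent:
    (e : A) (he : e * e = e) (he0 : e ≠ 0) (he1 : e ≠ 1)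
    (J : A →ₗ[R] A →ₗ[R] A)
    -- `J` is a Jordan biderivation:
    (hJ1 : ∀ x y : A, J (x * x) y = x * J x y + J x y * x)
    (hJ2 : ∀ x y : A, J x (y * y) = y * J x y + J x y * y) :
    ∀ x y : A, (x * y - y * x) * J e e - J e e * (x * y - y * x) = 0 :=
  jordan_biderivation_commutator_at_idempotent_general R A htf e he J hJ1 hJ2
end

section
/- Let J : A × A → A be a Jordan biderivation. Then J(e,e)·(exe') = 0, (exe')·J(e,e) = 0, (e'xe)·J(e,e) = 0, and J(e,e)·(e'xe) = 0 for all x ∈ A. -/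
/-!
Put `d = J(e,e)`. The first Jordan identity at `(e,e)` gives `d = e d + d e`, and at `(e,c)` it
gives `J(e,c) = e J(e,c) + J(e,c) e`. Linearizing the second identity shows that `J(e,·)` maps
`e c + c e` to `e J(e,c) + J(e,c) e + c d + d c`, so every `c` with `e c + c e = c` anticommutes
with `d`. Such a `c` is `a = e x e'`, and then `a d = e (a d + d a) e = 0`, whence also `d a = 0`.
The case `e' x e` is the same with the roles of `e` and `e'` exchanged.
-/

section JordanDerivation

variable {A F : Type*} [Ring A] [FunLike F A A] [AddMonoidHomClass F A A]

theorem map_mul_add_mul_of_map_mul_self {D : F} (hD : ∀ y, D (y * y) = y * D y + D y * y)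
    (y z : A) : D (y * z + z * y) = y * D z + D z * y + z * D y + D y * z := by
  have h := hD (y + z)
  rw [show (y + z) * (y + z) = y * y + (y * z + z * y) + z * z by noncomm_ring] at h
  simp only [map_add, hD] at h ⊢
  linear_combination (norm := noncomm_ring) h

theorem mul_map_add_map_mul_eq_zero {D : F} (hD : ∀ y, D (y * y) = y * D y + D y * y)
    {e c : A} (hc : e * c + c * e = c) (hDc : e * D c + D c * e = D c) :
    c * D e + D e * c = 0 := by
  have h := map_mul_add_mul_of_map_mul_self hD e c
  rw [hc] at h
  linear_combination (norm := noncomm_ring) -(h + hDc)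

end JordanDerivation

section Peirce

variable {A : Type*} [Ring A] {e d : A}

theorem one_sub_mul_add_mul_one_sub_eq_self_iff :
    (1 - e) * d + d * (1 - e) = d ↔ e * d + d * e = d := by
  constructor <;> intro h <;> linear_combination (norm := noncomm_ring) -h

theorem mul_eq_zero_and_mul_eq_zero_of_mul_add_mul_eq_zero {a : A} (hea : e * a = a)
    (hae : a * e = 0) (hd : e * d + d * e = d) (had : a * d + d * a = 0) :
    a * d = 0 ∧ d * a = 0 := by
  have hade : a * d * e = a * d := by
    linear_combination (norm := noncomm_ring) a * hd - hae * d
  have hproj : e * (a * d + d * a) * e = a * d := by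
    linear_combination (norm := noncomm_ring) hea * d * e + hade + e * d * hae
  have had0 : a * d = 0 := by rw [← hproj, had, mul_zero, zero_mul]
  exact ⟨had0, by rwa [had0, zero_add] at had⟩

theorem IsIdempotentElem.corner_mul_eq_zero_and_mul_corner_eq_zero (he : IsIdempotentElem e)
    (hd : e * d + d * e = d) (hanti : ∀ c, e * c + c * e = c → c * d + d * c = 0) (x : A) :
    e * x * (1 - e) * d = 0 ∧ d * (e * x * (1 - e)) = 0 := by
  have hea : e * (e * x * (1 - e)) = e * x * (1 - e) := by
    rw [← mul_assoc, ← mul_assoc, he.eq]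
  have hae : e * x * (1 - e) * e = 0 := by
    rw [mul_assoc, he.one_sub_mul_self, mul_zero]
  refine mul_eq_zero_and_mul_eq_zero_of_mul_add_mul_eq_zero hea hae hd (hanti _ ?_)
  rw [hea, hae, add_zero]

end Peirce

theorem jordan_biderivation_Jee_kills_offdiagonal_general
    (R A : Type*) [CommRing R] [Ring A] [Algebra R A]
    -- `e` is a nontrivial idempotent:
    (e : A) (he : e * e = e)
    (J : A →ₗ[R] A →ₗ[R] A)
    -- `J` is a Jordan biderivation:
    (hJ1 : ∀ x y : A, J (x * x) y = x * J x y + J x y * x)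
    (hJ2 : ∀ x y : A, J x (y * y) = y * J x y + J x y * y) :
    ∀ x : A,
      J e e * (e * x * (1 - e)) = 0 ∧
      (e * x * (1 - e)) * J e e = 0 ∧
      ((1 - e) * x * e) * J e e = 0 ∧
      J e e * ((1 - e) * x * e) = 0 := by
  intro x
  have hd : e * J e e + J e e * e = J e e := by rw [← hJ1, he]
  have hanti : ∀ c, e * c + c * e = c → c * J e e + J e e * c = 0 := fun c hc =>
    mul_map_add_map_mul_eq_zero (hJ2 e) hc (by rw [← hJ1, he])
  have he' : IsIdempotentElem e := he
  obtain ⟨hleft, hright⟩ := he'.corner_mul_eq_zero_and_mul_corner_eq_zero hd hanti x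
  obtain ⟨hleft', hright'⟩ := he'.one_sub.corner_mul_eq_zero_and_mul_corner_eq_zero
    (one_sub_mul_add_mul_one_sub_eq_self_iff.2 hd)
    (fun c hc => hanti c (one_sub_mul_add_mul_one_sub_eq_self_iff.1 hc)) x
  rw [sub_sub_cancel] at hleft' hright'
  exact ⟨hright, hleft, hleft', hright'⟩

/-- Let `J : A × A → A` be a Jordan biderivation and `e` a nontrivial
idempotent, `e' = 1 - e`.  Then `J(e,e)·(exe') = 0`, `(exe')·J(e,e) = 0`,
`(e'xe)·J(e,e) = 0` and `J(e,e)·(e'xe) = 0` for all `x ∈ A`. -/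
theorem jordan_biderivation_Jee_kills_offdiagonal
    (R A : Type*) [CommRing R] [Ring A] [Algebra R A]
    -- `A` is 2-torsion free:
    (htf : ∀ x : A, x + x = 0 → x = 0)
    -- `e` is a nontrivial idempotent:
    (e : A) (he : e * e = e) (he0 : e ≠ 0) (he1 : e ≠ 1)
    (J : A →ₗ[R] A →ₗ[R] A)
    -- `J` is a Jordan biderivation:
    (hJ1 : ∀ x y : A, J (x * x) y = x * J x y + J x y * x)
    (hJ2 : ∀ x y : A, J x (y * y) = y * J x y + J x y * y) :
    ∀ x : A,
      J e e * (e * x * (1 - e)) = 0 ∧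
      (e * x * (1 - e)) * J e e = 0 ∧
      ((1 - e) * x * e) * J e e = 0 ∧
      J e e * ((1 - e) * x * e) = 0 :=
  jordan_biderivation_Jee_kills_offdiagonal_general R A e he J hJ1 hJ2
end

section
/- Let J : A × A → A be a Jordan biderivation. Then J(xyx, z) = J(x,z)yx + xJ(y,z)x + xyJ(x,z) for all x, y, z ∈ A. -/
/-!
For fixed `z`, the map `x ↦ J x z` is a Jordan derivation.
Linearizing `D (x * x) = x * D x + D x * x` gives a formula for `D (a * b) + D (b * a)`; applying it
to the pairs `(x, x * y + y * x)`, `(x * x, y)` and `(x, y)` expresses `2 • D (x * y * x)` as twice the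
claimed right-hand side, and 2-torsion freeness cancels the factor `2`.
-/

def IsJordanDerivation {A : Type*} [NonUnitalNonAssocSemiring A] (D : A →+ A) : Prop :=
  ∀ x, D (x * x) = x * D x + D x * x

namespace IsJordanDerivation

variable {A : Type*} [NonUnitalRing A] {D : A →+ A}

theorem map_mul_add_map_mul_swap (hD : IsJordanDerivation D) (a b : A) :
    D (a * b) + D (b * a) = a * D b + D a * b + b * D a + D b * a := by
  have h := hD (a + b)
  rw [show (a + b) * (a + b) = a * a + (a * b + b * a) + b * b by noncomm_ring] at h
  simp only [map_add, hD a, hD b] at h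
  linear_combination (norm := noncomm_ring) h

theorem map_mul_mul_add_self (hD : IsJordanDerivation D) (x y : A) :
    D (x * y * x) + D (x * y * x) =
      (D x * y * x + x * D y * x + x * y * D x) + (D x * y * x + x * D y * x + x * y * D x) := by
  have l1 := hD.map_mul_add_map_mul_swap x (x * y + y * x)
  have l2 := hD.map_mul_add_map_mul_swap (x * x) y
  have l3 := hD.map_mul_add_map_mul_swap x y
  rw [show x * (x * y + y * x) = x * x * y + x * y * x by noncomm_ring,
    show (x * y + y * x) * x = x * y * x + y * (x * x) by noncomm_ring] at l1
  simp only [map_add] at l1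
  rw [hD x] at l2
  linear_combination (norm := noncomm_ring) l1 - l2 + x * l3 + l3 * x

theorem map_mul_mul (hD : IsJordanDerivation D) (htf : ∀ x : A, x + x = 0 → x = 0) (x y : A) :
    D (x * y * x) = D x * y * x + x * D y * x + x * y * D x := by
  refine sub_eq_zero.mp (htf _ ?_)
  rw [← add_sub_add_comm, hD.map_mul_mul_add_self, sub_self]

end IsJordanDerivation

theorem jordan_biderivation_triple_product_general
    (R A : Type*) [CommRing R] [Ring A] [Algebra R A]
    -- `A` is 2-torsion free:
    (htf : ∀ x : A, x + x = 0 → x = 0)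
    (J : A →ₗ[R] A →ₗ[R] A)
    -- `J` is a Jordan biderivation:
    (hJ1 : ∀ x y : A, J (x * x) y = x * J x y + J x y * x) :
    ∀ x y z : A, J (x * y * x) z = J x z * y * x + x * J y z * x + x * y * J x z := by
  intro x y z
  have hD : IsJordanDerivation (J.flip z).toAddMonoidHom := fun a => hJ1 a z
  exact hD.map_mul_mul htf x y

/-- Let `J : A × A → A` be a Jordan biderivation.
Then `J(xyx, z) = J(x,z)yx + xJ(y,z)x + xyJ(x,z)` for all `x, y, z ∈ A`. -/
theorem jordan_biderivation_triple_product
    (R A : Type*) [CommRing R] [Ring A] [Algebra R A]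
    -- `A` is 2-torsion free:
    (htf : ∀ x : A, x + x = 0 → x = 0)
    (J : A →ₗ[R] A →ₗ[R] A)
    -- `J` is a Jordan biderivation:
    (hJ1 : ∀ x y : A, J (x * x) y = x * J x y + J x y * x)
    (hJ2 : ∀ x y : A, J x (y * y) = y * J x y + J x y * y) :
    ∀ x y z : A, J (x * y * x) z = J x z * y * x + x * J y z * x + x * y * J x z :=
  jordan_biderivation_triple_product_general R A htf J hJ1
end

section
/- Let J : A × A → A be a Jordan biderivation with J(e, e) = 0. Then for all a ∈ A₁₁, b ∈ A₂₂ and n ∈ A₂₁: J(a, n) = aJ(e, n) + J(e, n)a, J(n, a) = aJ(n, e) + J(n, e)a, J(b, n) = bJ(e', n) + J(e', n)b, and J(n, b) = bJ(n, e') + J(n, e')b. -/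
/-!
For `x` in a corner `pAp` of an idempotent `p` with `J(p, p) = 0`, linearising `J(x², p)` at
`(p, x)` gives `J(2x, p) = pJ(x, p) + J(x, p)p = J(x, p)`, so `J(x, p) = 0`. If moreover
`pn + np = n`, as holds for `n ∈ e'Ae` with `p = e` or `p = e'`, comparing the linearisation of
`J(x², n)` at `(p, x)` with that of `J(x, n²)` at `(p, n)` yields `J(x, n) = xJ(p, n) + J(p, n)x`.
For `p = e'` note `J(e', e') = J(e, e) = 0`, as `J` vanishes when either argument is `1`.
-/

theorem IsIdempotentElem.mul_eq_self_of_mul_mul_eq {A : Type*} [Semigroup A] {p q a : A}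
    (hp : IsIdempotentElem p) (h : p * a * q = a) : p * a = a := by
  rw [← h, ← mul_assoc, ← mul_assoc, hp.eq]

theorem IsIdempotentElem.mul_eq_self_of_mul_mul_eq' {A : Type*} [Semigroup A] {p q a : A}
    (hq : IsIdempotentElem q) (h : p * a * q = a) : a * q = a := by
  rw [← h, mul_assoc, hq.eq]

structure IsJordanBiderivation_s10 {R A : Type*} [CommSemiring R] [Ring A] [Module R A]
    (J : A →ₗ[R] A →ₗ[R] A) : Prop where
  map_mul_self_left : ∀ x y : A, J (x * x) y = x * J x y + J x y * x
  map_mul_self_right : ∀ x y : A, J x (y * y) = y * J x y + J x y * y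

namespace IsJordanBiderivation_s10

variable {R A : Type*} [CommSemiring R] [Ring A] [Module R A] {J : A →ₗ[R] A →ₗ[R] A}

theorem map_add_mul_left (hJ : IsJordanBiderivation_s10 J) (x z y : A) :
    J (x * z + z * x) y = x * J z y + J z y * x + z * J x y + J x y * z := by
  have h := hJ.map_mul_self_left (x + z) y
  simp only [add_mul, mul_add, map_add, LinearMap.add_apply, hJ.map_mul_self_left x y,
    hJ.map_mul_self_left z y] at h ⊢
  linear_combination (norm := abel1) h

theorem map_add_mul_right (hJ : IsJordanBiderivation_s10 J) (x y z : A) :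
    J x (y * z + z * y) = y * J x z + J x z * y + z * J x y + J x y * z := by
  have h := hJ.map_mul_self_right x (y + z)
  simp only [add_mul, mul_add, map_add, hJ.map_mul_self_right x y,
    hJ.map_mul_self_right x z] at h ⊢
  linear_combination (norm := abel1) h

theorem map_one_left (hJ : IsJordanBiderivation_s10 J) (y : A) : J 1 y = 0 := by
  simpa using hJ.map_mul_self_left 1 y

theorem map_one_right (hJ : IsJordanBiderivation_s10 J) (x : A) : J x 1 = 0 := by
  simpa using hJ.map_mul_self_right x 1

theorem map_one_sub_one_sub (hJ : IsJordanBiderivation_s10 J) (p : A) :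
    J (1 - p) (1 - p) = J p p := by
  simp [hJ.map_one_left, hJ.map_one_right]

variable {p x : A}

theorem map_corner_idempotent (hJ : IsJordanBiderivation_s10 J) (hp : IsIdempotentElem p)
    (hpp : J p p = 0) (hpx : p * x = x) (hxp : x * p = x) : J x p = 0 := by
  have h := hJ.map_add_mul_left p x p
  rw [hpx, hxp, hpp, mul_zero, zero_mul, add_zero, add_zero, map_add, LinearMap.add_apply] at h
  have h' := hJ.map_mul_self_right x p
  rw [hp.eq] at h'
  linear_combination (norm := abel1) h - h'

theorem map_idempotent_corner (hJ : IsJordanBiderivation_s10 J) (hp : IsIdempotentElem p)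
    (hpp : J p p = 0) (hpx : p * x = x) (hxp : x * p = x) : J p x = 0 := by
  have h := hJ.map_add_mul_right p p x
  rw [hpx, hxp, hpp, mul_zero, zero_mul, add_zero, add_zero, map_add] at h
  have h' := hJ.map_mul_self_left p x
  rw [hp.eq] at h'
  linear_combination (norm := abel1) h - h'

variable {n : A}

theorem map_corner_left (hJ : IsJordanBiderivation_s10 J) (hp : IsIdempotentElem p)
    (hpp : J p p = 0) (hpx : p * x = x) (hxp : x * p = x) (hn : p * n + n * p = n) :
    J x n = x * J p n + J p n * x := by
  have h := hJ.map_add_mul_left p x n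
  rw [hpx, hxp, map_add, LinearMap.add_apply] at h
  have h' := hJ.map_add_mul_right x p n
  rw [hn, hJ.map_corner_idempotent hp hpp hpx hxp, mul_zero, zero_mul, add_zero, add_zero] at h'
  linear_combination (norm := abel1) h - h'

theorem map_corner_right (hJ : IsJordanBiderivation_s10 J) (hp : IsIdempotentElem p)
    (hpp : J p p = 0) (hpx : p * x = x) (hxp : x * p = x) (hn : p * n + n * p = n) :
    J n x = x * J n p + J n p * x := by
  have h := hJ.map_add_mul_right n p x
  rw [hpx, hxp, map_add] at h
  have h' := hJ.map_add_mul_left p n x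
  rw [hn, hJ.map_idempotent_corner hp hpp hpx hxp, mul_zero, zero_mul, add_zero, add_zero] at h'
  linear_combination (norm := abel1) h - h'

end IsJordanBiderivation_s10

theorem jordan_biderivation_components_with_n_general
    (R A : Type*) [CommRing R] [Ring A] [Algebra R A]
    (e : A) (he : e * e = e)
    (J : A →ₗ[R] A →ₗ[R] A)
    -- `J` is a Jordan biderivation:
    (hJ1 : ∀ x y : A, J (x * x) y = x * J x y + J x y * x)
    (hJ2 : ∀ x y : A, J x (y * y) = y * J x y + J x y * y)
    -- `J(e, e) = 0`:
    (hJe : J e e = 0) :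
    ∀ a b n : A,
      e * a * e = a → (1 - e) * b * (1 - e) = b → (1 - e) * n * e = n →
      J a n = a * J e n + J e n * a ∧
      J n a = a * J n e + J n e * a ∧
      J b n = b * J (1 - e) n + J (1 - e) n * b ∧
      J n b = b * J n (1 - e) + J n (1 - e) * b := by
  intro a b n ha hb hn
  have hJ : IsJordanBiderivation_s10 J := ⟨hJ1, hJ2⟩
  have he' : IsIdempotentElem (1 - e) := IsIdempotentElem.one_sub he
  have hJe' : J (1 - e) (1 - e) = 0 := (hJ.map_one_sub_one_sub e).trans hJe
  have hen : e * n = 0 := by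
    rw [← he'.mul_eq_self_of_mul_mul_eq hn, ← mul_assoc, IsIdempotentElem.mul_one_sub_self he,
      zero_mul]
  have hne : n * e = n := IsIdempotentElem.mul_eq_self_of_mul_mul_eq' he hn
  have hn₁ : e * n + n * e = n := by rw [hen, hne, zero_add]
  have hn₂ : (1 - e) * n + n * (1 - e) = n := by
    rw [sub_mul, mul_sub, one_mul, mul_one, hen, hne, sub_zero, sub_self, add_zero]
  have ha₁ := IsIdempotentElem.mul_eq_self_of_mul_mul_eq he ha
  have ha₂ := IsIdempotentElem.mul_eq_self_of_mul_mul_eq' he ha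
  have hb₁ := he'.mul_eq_self_of_mul_mul_eq hb
  have hb₂ := he'.mul_eq_self_of_mul_mul_eq' hb
  exact ⟨hJ.map_corner_left he hJe ha₁ ha₂ hn₁, hJ.map_corner_right he hJe ha₁ ha₂ hn₁,
    hJ.map_corner_left he' hJe' hb₁ hb₂ hn₂, hJ.map_corner_right he' hJe' hb₁ hb₂ hn₂⟩

/-- Let `J : A × A → A` be a Jordan biderivation with `J(e,e) = 0`.
Then for all `a ∈ A₁₁ = eAe`, `b ∈ A₂₂ = e'Ae'` and `n ∈ A₂₁ = e'Ae` (`e' = 1 - e`):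
`J(a,n) = aJ(e,n) + J(e,n)a`, `J(n,a) = aJ(n,e) + J(n,e)a`,
`J(b,n) = bJ(e',n) + J(e',n)b`, and `J(n,b) = bJ(n,e') + J(n,e')b`. -/
theorem jordan_biderivation_components_with_n
    (R A : Type*) [CommRing R] [Ring A] [Algebra R A]
    -- `A` is 2-torsion free:
    (htf : ∀ x : A, x + x = 0 → x = 0)
    -- `e` is a nontrivial idempotent:
    (e : A) (he : e * e = e) (he0 : e ≠ 0) (he1 : e ≠ 1)
    (J : A →ₗ[R] A →ₗ[R] A)
    -- `J` is a Jordan biderivation: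
    (hJ1 : ∀ x y : A, J (x * x) y = x * J x y + J x y * x)
    (hJ2 : ∀ x y : A, J x (y * y) = y * J x y + J x y * y)
    -- `J(e, e) = 0`:
    (hJe : J e e = 0) :
    ∀ a b n : A,
      e * a * e = a → (1 - e) * b * (1 - e) = b → (1 - e) * n * e = n →
      J a n = a * J e n + J e n * a ∧
      J n a = a * J n e + J n e * a ∧
      J b n = b * J (1 - e) n + J (1 - e) n * b ∧
      J n b = b * J n (1 - e) + J n (1 - e) * b :=
  jordan_biderivation_components_with_n_general R A e he J hJ1 hJ2 hJe
end
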